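/- (Second-order switching identity.) Fix real numbers u_P, u_V, and let z : ℝ → ℝ³ and λ : ℝ → ℝ³ be functions such that at some time t₀, z has derivative f(z(t₀)) + u_P · g_P(z(t₀)) + u_V · g_V(z(t₀)) and λ has derivative −(Df(z(t₀)) + u_P · Dg_P(z(t₀)) + u_V · Dg_V(z(t₀)))ᵀ λ(t₀), where ᵀ denotes the adjoint (transpose) with respect to the standard inner product ⟨·,·⟩ on ℝ³. Then the function t ↦ ⟨λ(t), [g_P, g_V](z(t))⟩ is differentiable at t₀ with derivative equal to ⟨λ(t₀), [f, [g_P, g_V]](z(t₀))⟩ + u_P · ⟨λ(t₀), [g_P, [g_P, g_V]](z(t₀))⟩ − u_V · ⟨λ(t₀), [g_P, g_V](z(t₀))⟩. -/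

import Mathlib

noncomputable section

/-- Drift vector field of the Mayer-form SIRI dynamics, `z = (x_C, x_S, x_R)`. -/
def fVec (cP cI γ : ℝ) (z : ℝ × ℝ × ℝ) : ℝ × ℝ × ℝ :=
  (cP * (z.2.1 + z.2.2) + cI * (1 - z.2.1 - z.2.2), 0, γ * (1 - z.2.1 - z.2.2))

/-- Control vector field for the protection input. -/
def gPVec (β βh cP : ℝ) (z : ℝ × ℝ × ℝ) : ℝ × ℝ × ℝ :=
  (-(cP * (z.2.1 + z.2.2)), -(β * z.2.1 * (1 - z.2.1 - z.2.2)),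
    -(βh * z.2.2 * (1 - z.2.1 - z.2.2)))

/-- Control vector field for the vaccination input. -/
def gVVec (cV : ℝ) (z : ℝ × ℝ × ℝ) : ℝ × ℝ × ℝ := (cV * z.2.1, -z.2.1, z.2.1)

/-- Lie bracket of two vector fields on `ℝ³`:
`[X, Y](z) = DY(z) X(z) − DX(z) Y(z)`, where `D` is the Fréchet derivative. -/
def lieBr (X Y : ℝ × ℝ × ℝ → ℝ × ℝ × ℝ) (z : ℝ × ℝ × ℝ) : ℝ × ℝ × ℝ :=
  fderiv ℝ Y z (X z) - fderiv ℝ X z (Y z)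

/-- Standard inner product on `ℝ³ = ℝ × ℝ × ℝ`. -/
def dot3 (a b : ℝ × ℝ × ℝ) : ℝ := a.1 * b.1 + a.2.1 * b.2.1 + a.2.2 * b.2.2

/-!
Along the controlled flow with closed-loop field `F = f + u_P g_P + u_V g_V`, the adjoint
equation cancels `DF` in the derivative of `⟨λ, Y(z)⟩`, which is therefore `⟨λ, [F, Y](z)⟩`
for any differentiable field `Y`. Take `Y = [g_P, g_V]` and expand `[F, Y]` by linearity of the
bracket in its first argument. An explicit computation gives
`[g_P, g_V](z) = x_S (1 - x_S - x_R) • (-c_V β, 0, β̂ - β)`, and from it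
`[g_V, [g_P, g_V]] = -[g_P, g_V]`.
-/

lemma dot3_add_right (a b c : ℝ × ℝ × ℝ) : dot3 a (b + c) = dot3 a b + dot3 a c := by
  simp only [dot3, Prod.fst_add, Prod.snd_add]; ring

lemma dot3_sub_right (a b c : ℝ × ℝ × ℝ) : dot3 a (b - c) = dot3 a b - dot3 a c := by
  simp only [dot3, Prod.fst_sub, Prod.snd_sub]; ring

lemma dot3_smul_right (a b : ℝ × ℝ × ℝ) (c : ℝ) : dot3 a (c • b) = c * dot3 a b := by
  simp only [dot3, Prod.smul_fst, Prod.smul_snd, smul_eq_mul]; ring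

lemma dot3_neg_right (a b : ℝ × ℝ × ℝ) : dot3 a (-b) = -dot3 a b := by
  simp only [dot3, Prod.fst_neg, Prod.snd_neg]; ring

open ContinuousLinearMap in
theorem HasDerivAt.dot3 {a b : ℝ → ℝ × ℝ × ℝ} {a' b' : ℝ × ℝ × ℝ} {t : ℝ}
    (ha : HasDerivAt a a' t) (hb : HasDerivAt b b' t) :
    HasDerivAt (fun s => dot3 (a s) (b s)) (dot3 a' (b t) + dot3 (a t) b') t := by
  have hX {c : ℝ → ℝ × ℝ × ℝ} {c'} (hc : HasDerivAt c c' t) :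
      HasDerivAt (fun s => (c s).1) c'.1 t :=
    (fst ℝ ℝ (ℝ × ℝ)).hasFDerivAt.comp_hasDerivAt t hc
  have hS {c : ℝ → ℝ × ℝ × ℝ} {c'} (hc : HasDerivAt c c' t) :
      HasDerivAt (fun s => (c s).2.1) c'.2.1 t :=
    ((fst ℝ ℝ ℝ).comp (snd ℝ ℝ (ℝ × ℝ))).hasFDerivAt.comp_hasDerivAt t hc
  have hR {c : ℝ → ℝ × ℝ × ℝ} {c'} (hc : HasDerivAt c c' t) :
      HasDerivAt (fun s => (c s).2.2) c'.2.2 t :=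
    ((snd ℝ ℝ ℝ).comp (snd ℝ ℝ (ℝ × ℝ))).hasFDerivAt.comp_hasDerivAt t hc
  exact ((((hX ha).fun_mul (hX hb)).fun_add ((hS ha).fun_mul (hS hb))).fun_add
    ((hR ha).fun_mul (hR hb))).congr_deriv (by simp only [_root_.dot3]; ring)

section LieBracket

variable {X X' Y : ℝ × ℝ × ℝ → ℝ × ℝ × ℝ} {z : ℝ × ℝ × ℝ}

lemma lieBr_add_left (hX : DifferentiableAt ℝ X z) (hX' : DifferentiableAt ℝ X' z) :
    lieBr (X + X') Y z = lieBr X Y z + lieBr X' Y z := by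
  simp only [lieBr, fderiv_add hX hX', Pi.add_apply, map_add, add_apply]
  abel

lemma lieBr_smul_left (c : ℝ) (hX : DifferentiableAt ℝ X z) :
    lieBr (c • X) Y z = c • lieBr X Y z := by
  simp only [lieBr, fderiv_const_smul hX, Pi.smul_apply, map_smul, smul_apply, smul_sub]

end LieBracket

theorem hasDerivAt_dot3_comp_lieBr {F Y : ℝ × ℝ × ℝ → ℝ × ℝ × ℝ}
    {F' : ℝ × ℝ × ℝ →L[ℝ] ℝ × ℝ × ℝ} {z lam : ℝ → ℝ × ℝ × ℝ} {lam' : ℝ × ℝ × ℝ} {t₀ : ℝ}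
    (hF : HasFDerivAt F F' (z t₀)) (hY : DifferentiableAt ℝ Y (z t₀))
    (hz : HasDerivAt z (F (z t₀)) t₀) (hlam : HasDerivAt lam lam' t₀)
    (hlam' : ∀ v, dot3 lam' v = -dot3 (lam t₀) (F' v)) :
    HasDerivAt (fun t => dot3 (lam t) (Y (z t))) (dot3 (lam t₀) (lieBr F Y (z t₀))) t₀ := by
  refine (hlam.dot3 (hY.hasFDerivAt.comp_hasDerivAt t₀ hz)).congr_deriv ?_
  rw [lieBr, hF.fderiv, dot3_sub_right, hlam', Function.comp_apply]
  ring

lemma fderiv_snd_fst_apply (z v : ℝ × ℝ × ℝ) :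
    fderiv ℝ (fun y : ℝ × ℝ × ℝ => y.2.1) z v = v.2.1 := by
  change fderiv ℝ (Prod.fst ∘ Prod.snd) z v = _
  rw [(hasFDerivAt_fst.comp z hasFDerivAt_snd).fderiv]; rfl

lemma fderiv_snd_snd_apply (z v : ℝ × ℝ × ℝ) :
    fderiv ℝ (fun y : ℝ × ℝ × ℝ => y.2.2) z v = v.2.2 := by
  change fderiv ℝ (Prod.snd ∘ Prod.snd) z v = _
  rw [(hasFDerivAt_snd.comp z hasFDerivAt_snd).fderiv]; rfl

lemma differentiable_fVec (cP cI γ : ℝ) : Differentiable ℝ (fVec cP cI γ) := by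
  unfold fVec; fun_prop

lemma differentiable_gPVec (β βh cP : ℝ) : Differentiable ℝ (gPVec β βh cP) := by
  unfold gPVec; fun_prop

lemma differentiable_gVVec (cV : ℝ) : Differentiable ℝ (gVVec cV) := by
  unfold gVVec; fun_prop

lemma fderiv_gVVec_apply (cV : ℝ) (z v : ℝ × ℝ × ℝ) :
    fderiv ℝ (gVVec cV) z v = (cV * v.2.1, -v.2.1, v.2.1) := by
  unfold gVVec
  simp (disch := fun_prop) [DifferentiableAt.fderiv_prodMk, fderiv_const_mul,
    fderiv_snd_fst_apply]

lemma fderiv_gPVec_apply (β βh cP : ℝ) (z v : ℝ × ℝ × ℝ) :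
    fderiv ℝ (gPVec β βh cP) z v =
      (-(cP * (v.2.1 + v.2.2)),
       -(β * ((1 - 2 * z.2.1 - z.2.2) * v.2.1 - z.2.1 * v.2.2)),
       -(βh * ((1 - z.2.1 - 2 * z.2.2) * v.2.2 - z.2.2 * v.2.1))) := by
  unfold gPVec
  simp (disch := fun_prop) [DifferentiableAt.fderiv_prodMk, fderiv_fun_mul, fderiv_fun_sub,
    fderiv_fun_add, fderiv_snd_fst_apply, fderiv_snd_snd_apply]
  refine ⟨by ring, by ring, by ring⟩

def bracketPV (β βh cV : ℝ) (z : ℝ × ℝ × ℝ) : ℝ × ℝ × ℝ :=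
  (z.2.1 * (1 - z.2.1 - z.2.2)) • (-(cV * β), 0, βh - β)

lemma differentiable_bracketPV (β βh cV : ℝ) : Differentiable ℝ (bracketPV β βh cV) := by
  unfold bracketPV; fun_prop

lemma fderiv_bracketPV_apply (β βh cV : ℝ) (z v : ℝ × ℝ × ℝ) :
    fderiv ℝ (bracketPV β βh cV) z v =
      ((1 - 2 * z.2.1 - z.2.2) * v.2.1 - z.2.1 * v.2.2) • (-(cV * β), 0, βh - β) := by
  unfold bracketPV
  rw [fderiv_smul_const (by fun_prop), ContinuousLinearMap.smulRight_apply]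
  congr 1
  simp (disch := fun_prop) [fderiv_fun_mul, fderiv_fun_sub, fderiv_snd_fst_apply,
    fderiv_snd_snd_apply]
  ring

lemma lieBr_gPVec_gVVec (β βh cP cV : ℝ) :
    lieBr (gPVec β βh cP) (gVVec cV) = bracketPV β βh cV := by
  funext z
  simp only [lieBr, fderiv_gPVec_apply, fderiv_gVVec_apply, gPVec, gVVec, bracketPV,
    Prod.mk_sub_mk, Prod.smul_mk, smul_eq_mul]
  refine Prod.ext (by ring) (Prod.ext (by ring) (by ring))

/-- `g_V` only reads `x_S`, which `[g_P, g_V]` does not move, and the derivative of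
`x_S (1 - x_S - x_R)` along `g_V` is `-x_S (1 - x_S - x_R)`. -/
lemma lieBr_gVVec_bracketPV (β βh cV : ℝ) :
    lieBr (gVVec cV) (bracketPV β βh cV) = -bracketPV β βh cV := by
  funext z
  simp only [lieBr, fderiv_bracketPV_apply, fderiv_gVVec_apply, gVVec, bracketPV,
    Prod.mk_sub_mk, Prod.smul_mk, smul_eq_mul, Pi.neg_apply, Prod.neg_mk]
  refine Prod.ext (by ring) (Prod.ext (by ring) (by ring))

theorem siri_phiV_second_derivative_general
    (β βh γ cP cV cI : ℝ)
    (uP uV t₀ : ℝ)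
    (z lam : ℝ → ℝ × ℝ × ℝ) (lam' : ℝ × ℝ × ℝ)
    (hz : HasDerivAt z
      (fVec cP cI γ (z t₀) + uP • gPVec β βh cP (z t₀) + uV • gVVec cV (z t₀)) t₀)
    (hlam : HasDerivAt lam lam' t₀)
    (hlam' : ∀ v : ℝ × ℝ × ℝ,
      dot3 lam' v =
        -(dot3 (lam t₀)
          (fderiv ℝ (fVec cP cI γ) (z t₀) v +
            uP • fderiv ℝ (gPVec β βh cP) (z t₀) v +
            uV • fderiv ℝ (gVVec cV) (z t₀) v))) :
    HasDerivAt (fun t => dot3 (lam t) (lieBr (gPVec β βh cP) (gVVec cV) (z t)))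
      (dot3 (lam t₀) (lieBr (fVec cP cI γ) (lieBr (gPVec β βh cP) (gVVec cV)) (z t₀)) +
        uP * dot3 (lam t₀)
          (lieBr (gPVec β βh cP) (lieBr (gPVec β βh cP) (gVVec cV)) (z t₀)) -
        uV * dot3 (lam t₀) (lieBr (gPVec β βh cP) (gVVec cV) (z t₀))) t₀ := by
  have hf := (differentiable_fVec cP cI γ).differentiableAt (x := z t₀)
  have hgP := (differentiable_gPVec β βh cP).differentiableAt (x := z t₀)
  have hgV := (differentiable_gVVec cV).differentiableAt (x := z t₀)
  have hF := (hf.hasFDerivAt.add (hgP.hasFDerivAt.const_smul uP)).add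
    (hgV.hasFDerivAt.const_smul uV)
  have hY : DifferentiableAt ℝ (lieBr (gPVec β βh cP) (gVVec cV)) (z t₀) := by
    rw [lieBr_gPVec_gVVec]; exact (differentiable_bracketPV β βh cV).differentiableAt
  refine (hasDerivAt_dot3_comp_lieBr hF hY hz hlam hlam').congr_deriv ?_
  rw [lieBr_add_left (hf.add (hgP.const_smul uP)) (hgV.const_smul uV),
    lieBr_add_left hf (hgP.const_smul uP), lieBr_smul_left _ hgP, lieBr_smul_left _ hgV,
    lieBr_gPVec_gVVec, lieBr_gVVec_bracketPV]
  simp only [dot3_add_right, dot3_smul_right, Pi.neg_apply, dot3_neg_right]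
  ring

/-- second-order switching identity: under the same controlled and
adjoint dynamics as in Statement 18,
`d/dt ⟨λ, [g_P, g_V](z)⟩ = ⟨λ, [f, [g_P, g_V]](z)⟩ + u_P ⟨λ, [g_P, [g_P, g_V]](z)⟩
 − u_V ⟨λ, [g_P, g_V](z)⟩` at `t₀`. -/
theorem siri_phiV_second_derivative
    (β βh γ cP cV cI : ℝ)
    (hβ : 0 < β) (hβh : 0 < βh) (hγ : 0 < γ)
    (hcP : 0 < cP) (hcV : 0 < cV) (hcI : 0 < cI)
    (uP uV t₀ : ℝ)
    (z lam : ℝ → ℝ × ℝ × ℝ) (lam' : ℝ × ℝ × ℝ)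
    (hz : HasDerivAt z
      (fVec cP cI γ (z t₀) + uP • gPVec β βh cP (z t₀) + uV • gVVec cV (z t₀)) t₀)
    (hlam : HasDerivAt lam lam' t₀)
    (hlam' : ∀ v : ℝ × ℝ × ℝ,
      dot3 lam' v =
        -(dot3 (lam t₀)
          (fderiv ℝ (fVec cP cI γ) (z t₀) v +
            uP • fderiv ℝ (gPVec β βh cP) (z t₀) v +
            uV • fderiv ℝ (gVVec cV) (z t₀) v))) :
    HasDerivAt (fun t => dot3 (lam t) (lieBr (gPVec β βh cP) (gVVec cV) (z t)))
      (dot3 (lam t₀) (lieBr (fVec cP cI γ) (lieBr (gPVec β βh cP) (gVVec cV)) (z t₀)) +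
        uP * dot3 (lam t₀)
          (lieBr (gPVec β βh cP) (lieBr (gPVec β βh cP) (gVVec cV)) (z t₀)) -
        uV * dot3 (lam t₀) (lieBr (gPVec β βh cP) (gVVec cV) (z t₀))) t₀ :=
  siri_phiV_second_derivative_general β βh γ cP cV cI uP uV t₀ z lam lam' hz hlam hlam'
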